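/- arXiv:1509.04190 — 3 statements merged into one kernel-verified Lean document; each statement's English description precedes it below -/
import Mathlib

section
/- Let z be a complex number with z ≠ 1. For every integer n ≥ 1, the Apostol–Bernoulli number satisfies B_n(z) = n · Σ_{k=0}^{n−1} [(-1)^k k!/(z−1)^{k+1}] z^k S(n−1, k), where S denotes Stirling numbers of the second kind. -/
/-!
With `w = exp x - 1` we have `1 / (z exp x - 1) = 1 / ((z - 1) + z w) = ∑ₖ (-z)ᵏ wᵏ / (z - 1)ᵏ⁺¹`
for small `x`, and `wᵏ = ∑ₘ k! S(m, k) xᵐ / m!`; the latter comes from `xᵐ = ∑ₖ S(m, k) x⁽ᵏ⁾`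
(falling factorials) through Newton's forward-difference formula. Near `0` the double series
converges absolutely, so regrouping it by powers of `x` gives the exponential generating function
of `∑ₖ (-1)ᵏ k! zᵏ S(m, k) / (z - 1)ᵏ⁺¹`. Multiplying by `x` shifts the index, and comparing
coefficients with the defining expansion of `B_n(0, z)` yields the closed form.
-/

/-- Stirling numbers of the second kind, via the standard recurrence. -/
def stirling : ℕ → ℕ → ℕ
  | 0, 0 => 1
  | 0, _ + 1 => 0
  | _ + 1, 0 => 0
  | n + 1, k + 1 => (k + 1) * stirling n (k + 1) + stirling n k

open Finset Filter Topology
open scoped Nat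

theorem stirling_eq_stirlingSecond : ∀ n k, stirling n k = Nat.stirlingSecond n k
  | 0, 0 | 0, _ + 1 | _ + 1, 0 => rfl
  | n + 1, k + 1 => by
    rw [stirling, Nat.stirlingSecond_succ_succ, stirling_eq_stirlingSecond n (k + 1),
      stirling_eq_stirlingSecond n k]

namespace Nat

theorem mul_descFactorial (x k : ℕ) :
    x * x.descFactorial k = x.descFactorial (k + 1) + k * x.descFactorial k := by
  rcases le_or_gt k x with hkx | hxk
  · rw [descFactorial_succ, ← add_mul, Nat.sub_add_cancel hkx]
  · simp [descFactorial_eq_zero_iff_lt.mpr hxk]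

theorem pow_eq_sum_stirlingSecond_mul_descFactorial (x m : ℕ) :
    x ^ m = ∑ k ∈ range (m + 1), stirlingSecond m k * x.descFactorial k := by
  induction m with
  | zero => simp
  | succ m ih =>
    have hshift : ∑ k ∈ range (m + 1), k * (stirlingSecond m k * x.descFactorial k) =
        ∑ k ∈ range (m + 1), (k + 1) * stirlingSecond m (k + 1) * x.descFactorial (k + 1) := by
      have h := sum_range_succ' (fun k ↦ k * (stirlingSecond m k * x.descFactorial k)) (m + 1)
      rw [sum_range_succ, stirlingSecond_eq_zero_of_lt (lt_succ_self m)] at h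
      simpa [mul_assoc] using h
    calc x ^ (m + 1) = ∑ k ∈ range (m + 1), x * (stirlingSecond m k * x.descFactorial k) := by
          rw [pow_succ', ih, mul_sum]
      _ = ∑ k ∈ range (m + 1), stirlingSecond m k * x.descFactorial (k + 1) +
            ∑ k ∈ range (m + 1), k * (stirlingSecond m k * x.descFactorial k) := by
          rw [← sum_add_distrib]
          exact sum_congr rfl fun k _ ↦ by rw [mul_left_comm, mul_descFactorial]; ring
      _ = ∑ k ∈ range (m + 2), stirlingSecond (m + 1) k * x.descFactorial k := by
          rw [hshift, sum_range_succ' _ (m + 1), ← sum_add_distrib]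
          simp only [stirlingSecond_succ_succ, stirlingSecond_succ_zero, zero_mul, add_zero]
          exact sum_congr rfl fun k _ ↦ by ring

theorem stirlingSecond_mul_factorial_eq_sum (m k : ℕ) :
    (stirlingSecond m k * k ! : ℤ) =
      ∑ j ∈ range (k + 1), (-1) ^ (k - j) * k.choose j * (j : ℤ) ^ m := by
  have hpow : (fun x : ℕ ↦ (x : ℤ) ^ m) =
      ∑ i ∈ range (m + 1), (stirlingSecond m i * i ! : ℤ) • fun x : ℕ ↦ (x.choose i : ℤ) := by
    ext x
    simp only [Finset.sum_apply, Pi.smul_apply, smul_eq_mul]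
    exact_mod_cast (pow_eq_sum_stirlingSecond_mul_descFactorial x m).trans
      (sum_congr rfl fun i _ ↦ by rw [descFactorial_eq_factorial_mul_choose]; ring)
  -- The `k`-th forward difference at `0` of `x ↦ x.choose i` is `1` if `i = k` and `0` otherwise.
  have h := fwdDiff_iter_eq_sum_shift 1 (fun x : ℕ ↦ (x : ℤ) ^ m) k 0
  rw [hpow, fwdDiff_iter_finsetSum] at h
  simp only [Finset.sum_apply, fwdDiff_iter_const_smul, Pi.smul_apply, fwdDiff_iter_choose_zero,
    smul_eq_mul, mul_ite, mul_one, mul_zero, sum_ite_eq, mem_range, zero_add] at h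
  rw [← h]
  split_ifs with hk
  · rfl
  · simp [stirlingSecond_eq_zero_of_lt (not_lt.mp hk)]

end Nat

theorem hasSum_stirlingSecond_egf {𝕂 : Type*} [RCLike 𝕂] (k : ℕ) (x : 𝕂) :
    HasSum (fun m ↦ (Nat.stirlingSecond m k * k ! : 𝕂) * x ^ m / m !)
      ((NormedSpace.exp x - 1) ^ k) := by
  have hexp : (NormedSpace.exp x - 1) ^ k =
      ∑ j ∈ range (k + 1), ((-1) ^ (k - j) * k.choose j : 𝕂) * NormedSpace.exp ((j : 𝕂) * x) := by
    rw [sub_eq_add_neg, add_pow]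
    exact sum_congr rfl fun j _ ↦ by rw [← nsmul_eq_mul, NormedSpace.exp_nsmul]; ring
  rw [hexp]
  refine (hasSum_sum fun j (_ : j ∈ range (k + 1)) ↦
    (NormedSpace.expSeries_div_hasSum_exp ((j : 𝕂) * x)).mul_left
      ((-1) ^ (k - j) * k.choose j : 𝕂)).congr_fun fun m ↦ ?_
  have h := congrArg (Int.cast : ℤ → 𝕂) (Nat.stirlingSecond_mul_factorial_eq_sum m k)
  push_cast at h
  rw [h, sum_mul, sum_div]
  exact sum_congr rfl fun j _ ↦ by ring

theorem hasSum_neg_pow_div_pow_succ {𝕜 : Type*} [NormedField 𝕜] {a b : 𝕜} (h : ‖b‖ < ‖a‖) :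
    HasSum (fun k ↦ (-b) ^ k / a ^ (k + 1)) (a + b)⁻¹ := by
  have ha : a ≠ 0 := norm_pos_iff.mp ((norm_nonneg b).trans_lt h)
  have hw : ‖-b / a‖ < 1 := by
    rwa [norm_div, norm_neg, div_lt_one (norm_pos_iff.mpr ha)]
  have hsum : a⁻¹ * (1 - -b / a)⁻¹ = (a + b)⁻¹ := by
    rw [← mul_inv]
    congr 1
    field_simp
    ring
  rw [← hsum]
  refine ((hasSum_geometric_of_norm_lt_one hw).mul_left a⁻¹).congr_fun fun k ↦ ?_
  rw [div_pow, pow_succ']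
  field_simp

theorem HasSum.sum_range_of_triangular {E : Type*} [NormedAddCommGroup E] [CompleteSpace E]
    {f : ℕ → ℕ → E} {g : ℕ → E} {s : E} (hf : ∀ k m, m < k → f k m = 0)
    (hnorm : Summable fun p : ℕ × ℕ ↦ ‖f p.1 p.2‖) (hrow : ∀ k, HasSum (f k) (g k))
    (hg : HasSum g s) : HasSum (fun m ↦ ∑ k ∈ range (m + 1), f k m) s := by
  have hf' : HasSum (fun p : ℕ × ℕ ↦ f p.1 p.2) s := by
    have h := hnorm.of_norm.hasSum
    rwa [(h.prod_fiberwise hrow).unique hg] at h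
  refine ((Equiv.prodComm ℕ ℕ).hasSum_iff.mpr hf').prod_fiberwise fun m ↦ ?_
  exact hasSum_sum_of_ne_finset_zero fun k hk ↦ hf k m (by simpa using hk)

theorem HasSum.egf_mul_id {𝕜 : Type*} [NormedField 𝕜] [CharZero 𝕜] {c : ℕ → 𝕜} {x s : 𝕜}
    (h : HasSum (fun m ↦ c m * x ^ m / m !) s) :
    HasSum (fun n ↦ n * c (n - 1) * x ^ n / n !) (x * s) := by
  refine (hasSum_nat_add_iff' 1).mp ?_
  simp only [range_one, sum_singleton, Nat.cast_zero, zero_mul, zero_div, sub_zero,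
    Nat.add_sub_cancel]
  refine (h.mul_left x).congr_fun fun m ↦ ?_
  rw [Nat.factorial_succ]
  push_cast
  field_simp
  ring

theorem eq_of_eventually_hasSum_egf {𝕜 : Type*} [NontriviallyNormedField 𝕜] [CharZero 𝕜]
    {a b : ℕ → 𝕜} {f : 𝕜 → 𝕜} (ha : ∀ᶠ x in 𝓝 0, HasSum (fun n ↦ a n * x ^ n / n !) (f x))
    (hb : ∀ᶠ x in 𝓝 0, HasSum (fun n ↦ b n * x ^ n / n !) (f x)) : a = b := by
  have hseries (c : ℕ → 𝕜) (hc : ∀ᶠ x in 𝓝 0, HasSum (fun n ↦ c n * x ^ n / n !) (f x)) :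
      HasFPowerSeriesAt f (.ofScalars 𝕜 fun n ↦ c n / n !) 0 :=
    hasFPowerSeriesAt_iff.mpr <| hc.mono fun x hx ↦ by
      rw [zero_add]
      refine hx.congr_fun fun n ↦ ?_
      rw [FormalMultilinearSeries.coeff_ofScalars, smul_eq_mul]
      ring
  funext n
  have h := congrFun (FormalMultilinearSeries.ofScalars_series_injective 𝕜 𝕜
    ((hseries a ha).eq_formalMultilinearSeries (hseries b hb))) n
  exact (div_left_inj' (Nat.cast_ne_zero.mpr n.factorial_ne_zero)).mp h

theorem hasSum_inv_mul_exp_sub_one (z x : ℂ) (hx : ‖z * (Complex.exp x - 1)‖ < ‖z - 1‖)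
    (hxr : ‖z‖ * (Real.exp ‖x‖ - 1) < ‖z - 1‖) :
    HasSum (fun m ↦ (∑ k ∈ range (m + 1), ((-1) ^ k * k ! / (z - 1) ^ (k + 1)) * z ^ k *
        (Nat.stirlingSecond m k : ℂ)) * x ^ m / m !) (z * Complex.exp x - 1)⁻¹ := by
  set c : ℕ → ℂ := fun k ↦ (-z) ^ k / (z - 1) ^ (k + 1) with hc
  set f : ℕ → ℕ → ℂ := fun k m ↦ c k * ((Nat.stirlingSecond m k * k ! : ℂ) * x ^ m / m !)
    with hf
  have hrow (k : ℕ) : HasSum (f k) (c k * (Complex.exp x - 1) ^ k) := by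
    rw [Complex.exp_eq_exp_ℂ]
    exact (hasSum_stirlingSecond_egf k x).mul_left (c k)
  have hcol : HasSum (fun k ↦ c k * (Complex.exp x - 1) ^ k) (z * Complex.exp x - 1)⁻¹ := by
    have h := hasSum_neg_pow_div_pow_succ hx
    rw [show z - 1 + z * (Complex.exp x - 1) = z * Complex.exp x - 1 by ring] at h
    refine h.congr_fun fun k ↦ ?_
    rw [hc, ← neg_mul, mul_pow]
    ring
  -- `hxr` makes the double series absolutely convergent, so it may be regrouped by powers of `x`.
  have hnorm : Summable fun p : ℕ × ℕ ↦ ‖f p.1 p.2‖ := by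
    have hrowR (k : ℕ) : HasSum (fun m ↦ ‖f k m‖) (‖c k‖ * (Real.exp ‖x‖ - 1) ^ k) := by
      rw [Real.exp_eq_exp_ℝ]
      refine ((hasSum_stirlingSecond_egf k ‖x‖).mul_left ‖c k‖).congr_fun fun m ↦ ?_
      simp [hf]
    have hexp_nonneg : 0 ≤ Real.exp ‖x‖ - 1 := sub_nonneg.mpr (Real.one_le_exp (norm_nonneg x))
    have hcolR : HasSum (fun k ↦ ‖c k‖ * (Real.exp ‖x‖ - 1) ^ k)
        (‖z - 1‖ + -(‖z‖ * (Real.exp ‖x‖ - 1)))⁻¹ := by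
      refine (hasSum_neg_pow_div_pow_succ ?_).congr_fun fun k ↦ ?_
      · rwa [norm_neg, Real.norm_of_nonneg (by positivity), Real.norm_of_nonneg (norm_nonneg _)]
      · rw [hc, neg_neg, norm_div, norm_pow, norm_pow, norm_neg, mul_pow]
        ring
    refine (summable_prod_of_nonneg fun _ ↦ norm_nonneg _).mpr
      ⟨fun k ↦ (hrowR k).summable, hcolR.summable.congr fun k ↦ (hrowR k).tsum_eq.symm⟩
  refine (HasSum.sum_range_of_triangular (fun k m hmk ↦ ?_) hnorm hrow hcol).congr_fun
    fun m ↦ ?_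
  · simp [hf, Nat.stirlingSecond_eq_zero_of_lt hmk]
  · rw [sum_mul, sum_div]
    refine sum_congr rfl fun k _ ↦ ?_
    rw [hf, hc, neg_pow]
    ring

theorem eventually_hasSum_inv_mul_exp_sub_one {z : ℂ} (hz : z ≠ 1) :
    ∀ᶠ x in 𝓝 0, HasSum (fun m ↦ (∑ k ∈ range (m + 1), ((-1) ^ k * k ! / (z - 1) ^ (k + 1)) *
        z ^ k * (Nat.stirlingSecond m k : ℂ)) * x ^ m / m !) (z * Complex.exp x - 1)⁻¹ := by
  have hz1 : 0 < ‖z - 1‖ := norm_pos_iff.mpr (sub_ne_zero.mpr hz)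
  have h : Tendsto (fun x : ℂ ↦ ‖z * (Complex.exp x - 1)‖) (𝓝 0) (𝓝 0) := by
    simpa using (by fun_prop : Continuous fun x : ℂ ↦ ‖z * (Complex.exp x - 1)‖).tendsto 0
  have hr : Tendsto (fun x : ℂ ↦ ‖z‖ * (Real.exp ‖x‖ - 1)) (𝓝 0) (𝓝 0) := by
    simpa using (by fun_prop : Continuous fun x : ℂ ↦ ‖z‖ * (Real.exp ‖x‖ - 1)).tendsto 0
  filter_upwards [h.eventually_lt_const hz1, hr.eventually_lt_const hz1] with x
  exact hasSum_inv_mul_exp_sub_one z x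

theorem apostolBernoulli_number_closed_form_general (z : ℂ) (hz : z ≠ 1) (B : ℕ → ℂ → ℂ)
    (hB : ∀ u : ℂ, ∀ᶠ x : ℂ in nhds 0,
      HasSum (fun m : ℕ => B m u * x ^ m / (m.factorial : ℂ))
        (x * Complex.exp (u * x) / (z * Complex.exp x - 1)))
    (n : ℕ) :
    B n 0 = (n : ℂ) * ∑ k ∈ Finset.range n,
      ((-1 : ℂ) ^ k * (k.factorial : ℂ) / (z - 1) ^ (k + 1)) * z ^ k *
        (stirling (n - 1) k : ℂ) := by
  have hB0 : ∀ᶠ x in 𝓝 0, HasSum (fun m ↦ B m 0 * x ^ m / m !) (x * (z * Complex.exp x - 1)⁻¹) :=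
    (hB 0).mono fun x hx ↦ by simpa [div_eq_mul_inv] using hx
  have hclosed := (eventually_hasSum_inv_mul_exp_sub_one hz).mono fun x hx ↦ hx.egf_mul_id
  rw [congrFun (eq_of_eventually_hasSum_egf hB0 hclosed) n]
  cases n with
  | zero => simp
  | succ n => simp [stirling_eq_stirlingSecond]

theorem apostolBernoulli_number_closed_form (z : ℂ) (hz : z ≠ 1) (B : ℕ → ℂ → ℂ)
    (hB : ∀ u : ℂ, ∀ᶠ x : ℂ in nhds 0,
      HasSum (fun m : ℕ => B m u * x ^ m / (m.factorial : ℂ))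
        (x * Complex.exp (u * x) / (z * Complex.exp x - 1)))
    (n : ℕ) (hn : 1 ≤ n) :
    B n 0 = (n : ℂ) * ∑ k ∈ Finset.range n,
      ((-1 : ℂ) ^ k * (k.factorial : ℂ) / (z - 1) ^ (k + 1)) * z ^ k *
        (stirling (n - 1) k : ℂ) :=
  apostolBernoulli_number_closed_form_general z hz B hB n
end

section
/- Let z be a complex number with z ≠ 1. For every integer n ≥ 0, B_n(u,z) = Σ_{k=0}^{n} k C(n,k) Σ_{j=0}^{k−1} (-1)^j z^j (z−1)^{−j−1} j! S(k−1, j) u^{n−k}, where S denotes Stirling numbers of the second kind. -/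
open Finset Nat Filter Topology

theorem stirling_eq_stirlingSecond_s8 : stirling = stirlingSecond := by
  funext n k
  induction n generalizing k with
  | zero => cases k <;> rfl
  | succ n ih =>
    cases k with
    | zero => rfl
    | succ k => simp only [stirling, stirlingSecond_succ_succ, ih]

section AlternatingBinomialSum

variable {R : Type*} [CommRing R]

theorem natCast_mul_choose_succ (j i : ℕ) :
    (i : R) * (j + 1).choose i = (j + 1) * ((j + 1).choose i - j.choose i) := by
  cases i with
  | zero => simp
  | succ i =>
    have h := congrArg (Nat.cast : ℕ → R) (add_one_mul_choose_eq j i)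
    rw [choose_succ_succ] at h ⊢
    push_cast at h ⊢
    linear_combination -h

theorem sum_range_neg_one_pow_mul_choose_mul_pow (m j : ℕ) :
    ∑ i ∈ range (j + 1), (-1 : R) ^ i * j.choose i * (i : R) ^ m =
      (-1) ^ j * j ! * stirlingSecond m j := by
  induction m generalizing j with
  | zero =>
    have := congrArg (Int.cast : ℤ → R) (Int.alternating_sum_range_choose (n := j))
    push_cast at this
    cases j <;> simp_all
  | succ m ih =>
    cases j with
    | zero => simp
    | succ j =>
      calc ∑ i ∈ range (j + 2), (-1 : R) ^ i * (j + 1).choose i * (i : R) ^ (m + 1)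
          = (j + 1) * (∑ i ∈ range (j + 2), (-1 : R) ^ i * (j + 1).choose i * (i : R) ^ m
              - ∑ i ∈ range (j + 2), (-1 : R) ^ i * j.choose i * (i : R) ^ m) := by
            rw [mul_sub, mul_sum, mul_sum, ← sum_sub_distrib]
            refine sum_congr rfl fun i _ => ?_
            linear_combination
              (-1 : R) ^ i * (i : R) ^ m * natCast_mul_choose_succ (R := R) j i
        _ = (-1) ^ (j + 1) * (j + 1)! * stirlingSecond (m + 1) (j + 1) := by
            rw [sum_range_succ (fun i => (-1 : R) ^ i * j.choose i * (i : R) ^ m),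
              choose_succ_self, Nat.cast_zero, mul_zero, zero_mul, add_zero, ih, ih,
              stirlingSecond_succ_succ, factorial_succ]
            push_cast
            ring

end AlternatingBinomialSum

section ExponentialGeneratingSeries

variable {𝕂 : Type*}

def egfTerm [DivisionRing 𝕂] (a : ℕ → 𝕂) (x : 𝕂) (n : ℕ) : 𝕂 := a n * x ^ n / n !

variable [NormedField 𝕂] [CharZero 𝕂] {a b : ℕ → 𝕂} {x : 𝕂}

theorem egfTerm_shift_succ (m : ℕ) :
    egfTerm (fun k => k * a (k - 1)) x (m + 1) = x * egfTerm a x m := by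
  simp only [egfTerm, add_tsub_cancel_right, factorial_succ, cast_mul, pow_succ]
  field_simp

-- The factor `k` kills the `k = 0` term, where `k - 1` truncates to `0`.
theorem HasSum.egfTerm_shift {s : 𝕂} (h : HasSum (egfTerm a x) s) :
    HasSum (egfTerm (fun k => k * a (k - 1)) x) (x * s) := by
  have h0 : egfTerm (fun k => k * a (k - 1)) x 0 = 0 := by simp [egfTerm]
  rw [← hasSum_nat_add_iff' 1, sum_range_one, h0, sub_zero]
  exact (h.mul_left x).congr_fun fun m => egfTerm_shift_succ m

theorem Summable.egfTerm_shift (h : Summable fun n => ‖egfTerm a x n‖) :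
    Summable fun n => ‖egfTerm (fun k => k * a (k - 1)) x n‖ := by
  rw [← summable_nat_add_iff 1]
  simpa [egfTerm_shift_succ, norm_mul] using h.mul_left ‖x‖

theorem HasSum.egfTerm_binomialConvolution [CompleteSpace 𝕂] {s t : 𝕂}
    (ha : HasSum (egfTerm a x) s) (ha' : Summable fun n => ‖egfTerm a x n‖)
    (hb : HasSum (egfTerm b x) t) (hb' : Summable fun n => ‖egfTerm b x n‖) :
    HasSum (egfTerm (fun n => ∑ k ∈ range (n + 1), n.choose k * a k * b (n - k)) x)
      (s * t) := by
  have h := hasSum_sum_range_mul_of_summable_norm ha' hb'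
  rw [ha.tsum_eq, hb.tsum_eq] at h
  refine h.congr_fun fun n => ?_
  simp only [egfTerm, sum_mul, sum_div]
  refine sum_congr rfl fun k hk => ?_
  have hkn : k ≤ n := Nat.lt_succ_iff.1 (mem_range.1 hk)
  have hx : x ^ n = x ^ k * x ^ (n - k) := by rw [← pow_add, Nat.add_sub_cancel' hkn]
  rw [cast_choose 𝕂 hkn, hx]
  field_simp
  rw [div_eq_div_iff (by simp [factorial_ne_zero]) (by simp [factorial_ne_zero])]
  ring

theorem eq_of_eventually_hasSum_egfTerm {𝕜 : Type*} [NontriviallyNormedField 𝕜]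
    [CharZero 𝕜] {a b : ℕ → 𝕜} {f : 𝕜 → 𝕜}
    (ha : ∀ᶠ x in 𝓝 0, HasSum (egfTerm a x) (f x))
    (hb : ∀ᶠ x in 𝓝 0, HasSum (egfTerm b x) (f x)) : a = b := by
  have hseries (c : ℕ → 𝕜) (hc : ∀ᶠ x in 𝓝 0, HasSum (egfTerm c x) (f x)) :
      HasFPowerSeriesAt f (FormalMultilinearSeries.ofScalars 𝕜 fun n => c n / n !) 0 := by
    rw [hasFPowerSeriesAt_iff]
    filter_upwards [hc] with x hx
    rw [zero_add]
    refine hx.congr_fun fun n => ?_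
    simp only [FormalMultilinearSeries.coeff_ofScalars, egfTerm, smul_eq_mul]
    ring
  have h := FormalMultilinearSeries.ofScalars_series_injective 𝕜 𝕜
    ((hseries a ha).eq_formalMultilinearSeries (hseries b hb))
  funext n
  simpa [(factorial_pos n).ne'] using congrFun h n

end ExponentialGeneratingSeries

theorem hasSum_egfTerm_stirlingSecond {𝕂 : Type*} [NormedField 𝕂] [NormedAlgebra ℚ 𝕂]
    [CompleteSpace 𝕂] (j : ℕ) (x : 𝕂) :
    HasSum (egfTerm (fun m => (j ! * stirlingSecond m j : 𝕂)) x)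
      ((NormedSpace.exp x - 1) ^ j) := by
  have hexp (i : ℕ) :
      HasSum (fun m => (-1) ^ j * ((-1) ^ i * j.choose i * ((i * x) ^ m / m !)))
        ((-1) ^ j * ((-1) ^ i * j.choose i * NormedSpace.exp x ^ i)) := by
    rw [← NormedSpace.exp_nsmul, nsmul_eq_mul]
    exact ((NormedSpace.expSeries_div_hasSum_exp ((i : 𝕂) * x)).mul_left
      ((-1 : 𝕂) ^ i * j.choose i)).mul_left ((-1 : 𝕂) ^ j)
  have hbinom : ∑ i ∈ range (j + 1),
      (-1) ^ j * ((-1) ^ i * j.choose i * NormedSpace.exp x ^ i) = (NormedSpace.exp x - 1) ^ j := by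
    rw [← mul_sum, show NormedSpace.exp x - 1 = -1 * (-NormedSpace.exp x + 1) by ring, mul_pow,
      add_pow]
    congr 1
    refine sum_congr rfl fun i _ => ?_
    rw [neg_pow (NormedSpace.exp x)]
    ring
  rw [← hbinom]
  refine (hasSum_sum fun i _ => hexp i).congr_fun fun m => ?_
  have hsign : ((-1 : 𝕂) ^ j) ^ 2 = 1 := by rw [← pow_mul, mul_comm, pow_mul]; simp
  calc egfTerm (fun m => (j ! * stirlingSecond m j : 𝕂)) x m
      = (-1) ^ j * (∑ i ∈ range (j + 1), (-1 : 𝕂) ^ i * j.choose i * (i : 𝕂) ^ m) *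
          x ^ m / m ! := by
        rw [egfTerm, sum_range_neg_one_pow_mul_choose_mul_pow]
        linear_combination (-(j ! * stirlingSecond m j * x ^ m / m ! : 𝕂)) * hsign
    _ = _ := by
        rw [mul_sum, sum_mul, sum_div]
        refine sum_congr rfl fun i _ => ?_
        ring

section TriangularDoubleSeries

variable {E : Type*} [NormedAddCommGroup E] {F : ℕ → ℕ → E}

theorem hasSum_sum_range_of_triangular [CompleteSpace E] {g : ℕ → E} {s : E}
    (hF : Summable fun p : ℕ × ℕ => ‖F p.1 p.2‖) (htri : ∀ j m, m < j → F j m = 0)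
    (hrow : ∀ j, HasSum (F j) (g j)) (hg : HasSum g s) :
    HasSum (fun m => ∑ j ∈ range (m + 1), F j m) s := by
  have htotal : HasSum (fun p : ℕ × ℕ => F p.2 p.1) s := by
    have h := hF.of_norm.hasSum
    rw [← hg.unique (h.prod_fiberwise hrow)] at h
    exact (Equiv.prodComm ℕ ℕ).hasSum_iff.2 h
  refine htotal.prod_fiberwise fun m => hasSum_sum_of_ne_finset_zero fun j hj => ?_
  exact htri j m (by simpa using hj)

theorem summable_norm_sum_range_of_triangular
    (hF : Summable fun p : ℕ × ℕ => ‖F p.1 p.2‖) (htri : ∀ j m, m < j → F j m = 0) :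
    Summable fun m => ‖∑ j ∈ range (m + 1), F j m‖ := by
  refine hF.prod_symm.prod.of_nonneg_of_le (fun m => norm_nonneg _) fun m => ?_
  rw [tsum_eq_sum (s := range (m + 1)) fun j hj => by simp [htri j m (by simpa using hj)]]
  exact norm_sum_le _ _

end TriangularDoubleSeries

theorem zpow_neg_natCast_sub_one {K : Type*} [DivisionRing K] (a : K) (j : ℕ) :
    a ^ (-(j : ℤ) - 1) = (a ^ (j + 1))⁻¹ := by
  rw [← zpow_natCast, ← zpow_neg]
  push_cast
  ring_nf

section ApostolWeight

variable {𝕂 : Type*}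

def apostolWeight [DivisionRing 𝕂] (z : 𝕂) (j : ℕ) : 𝕂 :=
  (-1) ^ j * z ^ j * (z - 1) ^ (-(j : ℤ) - 1)

theorem apostolWeight_mul_pow [Field 𝕂] (z y : 𝕂) (j : ℕ) :
    apostolWeight z j * y ^ j = (z - 1)⁻¹ * (-(z * y) / (z - 1)) ^ j := by
  rw [apostolWeight, zpow_neg_natCast_sub_one, div_pow, neg_pow (z * y), mul_pow, pow_succ,
    mul_inv]
  ring

variable [NormedField 𝕂]

theorem hasSum_apostolWeight_mul_pow {z y : 𝕂} (h : ‖z * y‖ < ‖z - 1‖) :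
    HasSum (fun j => apostolWeight z j * y ^ j) (z * (y + 1) - 1)⁻¹ := by
  have hz : z - 1 ≠ 0 := norm_pos_iff.1 ((norm_nonneg _).trans_lt h)
  have hw : ‖-(z * y) / (z - 1)‖ < 1 := by
    rwa [norm_div, norm_neg, div_lt_one (norm_pos_iff.2 hz)]
  have hsum : (z - 1)⁻¹ * (1 - -(z * y) / (z - 1))⁻¹ = (z * (y + 1) - 1)⁻¹ := by
    rw [← mul_inv]
    field_simp
    ring
  simpa only [apostolWeight_mul_pow, hsum]
    using (hasSum_geometric_of_norm_lt_one hw).mul_left (z - 1)⁻¹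

theorem summable_norm_apostolWeight_mul_pow {z : 𝕂} {t : ℝ} (ht : 0 ≤ t)
    (h : ‖z‖ * t < ‖z - 1‖) : Summable fun j => ‖apostolWeight z j‖ * t ^ j := by
  have hz : 0 < ‖z - 1‖ := (mul_nonneg (norm_nonneg z) ht).trans_lt h
  have hr : ‖z‖ * t / ‖z - 1‖ < 1 := (div_lt_one hz).2 h
  refine ((summable_geometric_of_lt_one (by positivity) hr).mul_left ‖z - 1‖⁻¹).congr
    fun j => ?_
  rw [apostolWeight, norm_mul, norm_mul, norm_zpow, zpow_neg_natCast_sub_one]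
  simp only [norm_pow, norm_neg, norm_one, one_pow, one_mul, div_pow, mul_pow, pow_succ]
  field_simp

end ApostolWeight

section ApostolCoefficients

variable {z x : ℂ}

noncomputable def apostolCoeff (z : ℂ) (m : ℕ) : ℂ :=
  ∑ j ∈ range (m + 1), apostolWeight z j * j ! * stirlingSecond m j

theorem Complex.hasSum_egfTerm_stirlingSecond (j : ℕ) (x : ℂ) :
    HasSum (egfTerm (fun m => (j ! * stirlingSecond m j : ℂ)) x)
      ((Complex.exp x - 1) ^ j) := by
  rw [Complex.exp_eq_exp_ℂ]
  exact _root_.hasSum_egfTerm_stirlingSecond j x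

theorem hasSum_norm_egfTerm_stirlingSecond (j : ℕ) (x : ℂ) :
    HasSum (fun m => ‖egfTerm (fun m => (j ! * stirlingSecond m j : ℂ)) x m‖)
      ((Real.exp ‖x‖ - 1) ^ j) := by
  rw [Real.exp_eq_exp_ℝ]
  refine (hasSum_egfTerm_stirlingSecond j ‖x‖).congr_fun fun m => ?_
  simp [egfTerm]

theorem norm_exp_sub_one_le_exp_norm_sub_one (x : ℂ) :
    ‖Complex.exp x - 1‖ ≤ Real.exp ‖x‖ - 1 := by
  simpa using (Complex.hasSum_egfTerm_stirlingSecond 1 x).norm_le_of_bounded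
    (hasSum_norm_egfTerm_stirlingSecond 1 x) fun m => le_rfl

theorem hasSum_egfTerm_apostolCoeff (hx : ‖z‖ * (Real.exp ‖x‖ - 1) < ‖z - 1‖) :
    HasSum (egfTerm (apostolCoeff z) x) (z * Complex.exp x - 1)⁻¹ ∧
      Summable fun m => ‖egfTerm (apostolCoeff z) x m‖ := by
  set F : ℕ → ℕ → ℂ := fun j =>
    apostolWeight z j • egfTerm (fun m => (j ! * stirlingSecond m j : ℂ)) x with hF
  have hrow (j : ℕ) : HasSum (F j) (apostolWeight z j * (Complex.exp x - 1) ^ j) := by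
    rw [← smul_eq_mul]
    exact (Complex.hasSum_egfTerm_stirlingSecond j x).const_smul _
  have hrow_norm (j : ℕ) :
      HasSum (fun m => ‖F j m‖) (‖apostolWeight z j‖ * (Real.exp ‖x‖ - 1) ^ j) := by
    simpa only [hF, Pi.smul_apply, norm_smul]
      using (hasSum_norm_egfTerm_stirlingSecond j x).mul_left _
  have hFnorm : Summable fun p : ℕ × ℕ => ‖F p.1 p.2‖ := by
    refine (summable_prod_of_nonneg fun _ => norm_nonneg _).2
      ⟨fun j => (hrow_norm j).summable, ?_⟩
    simpa only [(hrow_norm _).tsum_eq] using summable_norm_apostolWeight_mul_pow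
      (sub_nonneg.2 (Real.one_le_exp (norm_nonneg x))) hx
  have hgeom : HasSum (fun j => apostolWeight z j * (Complex.exp x - 1) ^ j)
      (z * Complex.exp x - 1)⁻¹ := by
    have hsmall : ‖z * (Complex.exp x - 1)‖ < ‖z - 1‖ := by
      rw [norm_mul]
      exact lt_of_le_of_lt (by gcongr; exact norm_exp_sub_one_le_exp_norm_sub_one x) hx
    simpa only [sub_add_cancel] using hasSum_apostolWeight_mul_pow hsmall
  have htri (j m : ℕ) (h : m < j) : F j m = 0 := by
    simp [hF, egfTerm, stirlingSecond_eq_zero_of_lt h]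
  have hcol (m : ℕ) : ∑ j ∈ range (m + 1), F j m = egfTerm (apostolCoeff z) x m := by
    simp only [hF, egfTerm, apostolCoeff, sum_mul, sum_div, Pi.smul_apply, smul_eq_mul]
    refine sum_congr rfl fun j _ => ?_
    ring
  have hsum := hasSum_sum_range_of_triangular hFnorm htri hrow hgeom
  have hnorm := summable_norm_sum_range_of_triangular hFnorm htri
  simp only [hcol] at hsum hnorm
  exact ⟨hsum, hnorm⟩

end ApostolCoefficients

theorem hasSum_egfTerm_apostolBernoulli_closedForm {z x : ℂ}
    (hx : ‖z‖ * (Real.exp ‖x‖ - 1) < ‖z - 1‖) (u : ℂ) :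
    HasSum (egfTerm (fun n => ∑ k ∈ range (n + 1),
        n.choose k * (k * apostolCoeff z (k - 1)) * u ^ (n - k)) x)
      (x * Complex.exp (u * x) / (z * Complex.exp x - 1)) := by
  obtain ⟨hA, hA_norm⟩ := hasSum_egfTerm_apostolCoeff hx
  have hexp : HasSum (egfTerm (fun n => u ^ n) x) (Complex.exp (u * x)) := by
    rw [Complex.exp_eq_exp_ℂ]
    exact (NormedSpace.expSeries_div_hasSum_exp (u * x)).congr_fun fun n => by
      rw [egfTerm, mul_pow]
  have hexp_norm : Summable fun n => ‖egfTerm (fun n => u ^ n) x n‖ := by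
    simpa only [egfTerm, mul_pow] using NormedSpace.norm_expSeries_div_summable (u * x)
  rw [div_eq_mul_inv, mul_right_comm]
  exact hA.egfTerm_shift.egfTerm_binomialConvolution hA_norm.egfTerm_shift hexp hexp_norm

theorem apostolBernoulli_closed_form_Luo (z : ℂ) (hz : z ≠ 1) (B : ℕ → ℂ → ℂ)
    (hB : ∀ u : ℂ, ∀ᶠ x : ℂ in nhds 0,
      HasSum (fun m : ℕ => B m u * x ^ m / (m.factorial : ℂ))
        (x * Complex.exp (u * x) / (z * Complex.exp x - 1)))
    (n : ℕ) (u : ℂ) :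
    B n u = ∑ k ∈ Finset.range (n + 1), (k : ℂ) * (n.choose k : ℂ) *
      (∑ j ∈ Finset.range k, (-1 : ℂ) ^ j * z ^ j * (z - 1) ^ (-(j : ℤ) - 1) *
        (j.factorial : ℂ) * (stirling (k - 1) j : ℂ)) * u ^ (n - k) := by
  have hsmall : ∀ᶠ x : ℂ in 𝓝 0, ‖z‖ * (Real.exp ‖x‖ - 1) < ‖z - 1‖ := by
    have hcont : Continuous fun x : ℂ => ‖z‖ * (Real.exp ‖x‖ - 1) := by fun_prop
    exact (hcont.tendsto' 0 0 (by simp)).eventually_lt_const (norm_pos_iff.2 (sub_ne_zero.2 hz))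
  have hcoeff := eq_of_eventually_hasSum_egfTerm (a := fun m => B m u) (hB u)
    (hsmall.mono fun x hx => hasSum_egfTerm_apostolBernoulli_closedForm hx u)
  rw [congrFun hcoeff n, stirling_eq_stirlingSecond_s8]
  refine sum_congr rfl fun k _ => ?_
  cases k with
  | zero => simp
  | succ k =>
    simp only [apostolCoeff, apostolWeight, add_tsub_cancel_right]
    ring
end

section
/- For integers n ≥ k ≥ 0 and sequences (x_i), (y_i), the Bell polynomials of the second kind satisfy the addition formula B_{n,k}(x_1+y_1, …, x_{n−k+1}+y_{n−k+1}) = Σ_{r+s=k} Σ_{ℓ+m=n} C(n,ℓ) B_{ℓ,r}(x_1,…,x_{ℓ−r+1}) B_{m,s}(y_1,…,y_{m−s+1}). -/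
/-!
Write `E_x(t) = ∑_{j ≥ 1} x_j t^j / j!`. Expanding `E_x^k` by the multinomial theorem collects,
for every partition of `n` into `k` parts with `ℓ_j` parts of size `j`, the term
`k! / ∏ ℓ_j! · ∏ (x_j / j!)^{ℓ_j} t^n`, so `B_{n,k}(x) = n! / k! · [t^n] E_x^k`. Since
`E_{x+y} = E_x + E_y`, the binomial theorem for `(E_x + E_y)^k` and the Cauchy product
`[t^n] (E_x^r E_y^s) = ∑_{l+m=n} [t^l] E_x^r · [t^m] E_y^s` give the formula after
`n! / k! · C(k, r) = C(n, l) · l! / r! · m! / s!`.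
We work with `E_x` truncated after `t^N`: for `N ≥ n - k + 1` this does not change `[t^n] E_x^k`,
as no part of a partition of `n` into `k` parts exceeds `n - k + 1`.
-/

/-- The Bell polynomial of the second kind `B_{n,k}(x 1, …, x (n-k+1))`. -/
noncomputable def bell (n k : ℕ) (x : ℕ → ℂ) : ℂ :=
  ∑ ℓ : Fin (n - k + 1) → Fin (n + 1),
    if (∑ i : Fin (n - k + 1), (ℓ i : ℕ)) = k ∧
        (∑ i : Fin (n - k + 1), ((i : ℕ) + 1) * (ℓ i : ℕ)) = n then
      (n.factorial : ℂ) / (∏ i : Fin (n - k + 1), ((ℓ i : ℕ).factorial : ℂ)) *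
        ∏ i : Fin (n - k + 1), (x ((i : ℕ) + 1) / ((((i : ℕ) + 1).factorial : ℕ) : ℂ)) ^ (ℓ i : ℕ)
    else 0

open Finset Polynomial

theorem Nat.cast_multinomial {α K : Type*} [Field K] [CharZero K] (s : Finset α) (f : α → ℕ) :
    (Nat.multinomial s f : K) = (∑ i ∈ s, f i).factorial / ∏ i ∈ s, ((f i).factorial : K) := by
  rw [eq_div_iff (prod_ne_zero_iff.2 fun i _ => Nat.cast_ne_zero.2 (Nat.factorial_ne_zero _)),
    mul_comm]
  exact_mod_cast Nat.multinomial_spec s f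

def extendZero {M : ℕ} (f : Fin M → ℕ) (j : ℕ) : ℕ :=
  if h : j < M then f ⟨j, h⟩ else 0

@[to_additive]
theorem prod_range_extendZero {β : Type*} [CommMonoid β] {M N : ℕ} (hMN : M ≤ N)
    (f : Fin M → ℕ) (g : ℕ → ℕ → β) (hg : ∀ j, g j 0 = 1) :
    ∏ j ∈ range N, g j (extendZero f j) = ∏ i : Fin M, g i (f i) := by
  rw [← prod_subset (range_subset_range.2 hMN) fun j _ hj => by
      rw [extendZero, dif_neg (by simpa using hj), hg],
    ← Fin.prod_univ_eq_prod_range]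
  simp [extendZero]

/-- `ℓ i` counts the parts of size `i + 1` of a partition of `n` into `k` parts. -/
def partitionMultiplicities (N n k : ℕ) : Finset (ℕ → ℕ) :=
  {ℓ ∈ piAntidiag (range N) k | ∑ i ∈ range N, (i + 1) * ℓ i = n}

section partitionMultiplicities

variable {N n k : ℕ} {ℓ : ℕ → ℕ}

theorem mem_partitionMultiplicities :
    ℓ ∈ partitionMultiplicities N n k ↔
      (∑ i ∈ range N, ℓ i = k ∧ ∀ i, ℓ i ≠ 0 → i < N) ∧ ∑ i ∈ range N, (i + 1) * ℓ i = n := by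
  simp [partitionMultiplicities]

theorem le_of_mem_partitionMultiplicities (hℓ : ℓ ∈ partitionMultiplicities N n k) (j : ℕ) :
    ℓ j ≤ n := by
  obtain ⟨⟨-, hsupp⟩, hweight⟩ := mem_partitionMultiplicities.1 hℓ
  by_cases hj : ℓ j = 0
  · simp [hj]
  calc ℓ j ≤ (j + 1) * ℓ j := Nat.le_mul_of_pos_left _ j.succ_pos
    _ ≤ ∑ i ∈ range N, (i + 1) * ℓ i :=
      single_le_sum (f := fun i => (i + 1) * ℓ i) (fun _ _ => Nat.zero_le _)
        (mem_range.2 (hsupp j hj))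
    _ = n := hweight

theorem lt_of_mem_partitionMultiplicities (hℓ : ℓ ∈ partitionMultiplicities N n k) {j : ℕ}
    (hj : ℓ j ≠ 0) : j < n - k + 1 := by
  obtain ⟨⟨hsum, hsupp⟩, hweight⟩ := mem_partitionMultiplicities.1 hℓ
  have hsplit : ∑ i ∈ range N, (i + 1) * ℓ i = ∑ i ∈ range N, i * ℓ i + ∑ i ∈ range N, ℓ i := by
    rw [← sum_add_distrib]; simp only [add_mul, one_mul]
  have hterm : j * ℓ j ≤ ∑ i ∈ range N, i * ℓ i :=
    single_le_sum (f := fun i => i * ℓ i) (fun _ _ => Nat.zero_le _) (mem_range.2 (hsupp j hj))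
  have hj_le : j ≤ j * ℓ j := Nat.le_mul_of_pos_right _ (Nat.pos_of_ne_zero hj)
  omega

theorem extendZero_eq_of_mem_partitionMultiplicities (hℓ : ℓ ∈ partitionMultiplicities N n k) :
    extendZero (fun i : Fin (n - k + 1) => ℓ i) = ℓ := by
  funext j
  rw [extendZero]
  split_ifs with h
  · rfl
  · by_contra hj
    exact h (lt_of_mem_partitionMultiplicities hℓ (Ne.symm hj))

end partitionMultiplicities

noncomputable def egf {K : Type*} [Field K] (N : ℕ) (x : ℕ → K) : K[X] :=
  ∑ i ∈ range N, C (x (i + 1) / (i + 1).factorial) * X ^ (i + 1)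

theorem egf_add {K : Type*} [Field K] (N : ℕ) (x y : ℕ → K) :
    egf N (fun i => x i + y i) = egf N x + egf N y := by
  simp only [egf, add_div, C_add, add_mul, sum_add_distrib]

theorem coeff_egf_pow {K : Type*} [Field K] (N n k : ℕ) (x : ℕ → K) :
    (egf N x ^ k).coeff n = ∑ ℓ ∈ partitionMultiplicities N n k,
      (Nat.multinomial (range N) ℓ : K) *
        ∏ i ∈ range N, (x (i + 1) / (i + 1).factorial) ^ ℓ i := by
  rw [egf, sum_pow_eq_sum_piAntidiag, finsetSum_coeff, partitionMultiplicities, sum_filter]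
  refine sum_congr rfl fun ℓ _ => ?_
  have hmonomial : ∏ i ∈ range N, (C (x (i + 1) / (i + 1).factorial) * X ^ (i + 1)) ^ ℓ i =
      C (∏ i ∈ range N, (x (i + 1) / (i + 1).factorial) ^ ℓ i) *
        X ^ ∑ i ∈ range N, (i + 1) * ℓ i := by
    simp only [mul_pow, prod_mul_distrib, ← pow_mul, prod_pow_eq_pow_sum, map_prod, C_pow]
  rw [hmonomial, ← map_natCast C, ← mul_assoc, ← C_mul, coeff_C_mul_X_pow]
  simp only [eq_comm]

theorem bell_eq_sum_partitionMultiplicities {n k N : ℕ} (hN : n - k + 1 ≤ N) (x : ℕ → ℂ) :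
    bell n k x = ∑ ℓ ∈ partitionMultiplicities N n k,
      (n.factorial : ℂ) / (∏ i ∈ range N, ((ℓ i).factorial : ℂ)) *
        ∏ i ∈ range N, (x (i + 1) / (i + 1).factorial) ^ ℓ i := by
  rw [bell, ← sum_filter]
  refine sum_bij' (fun ℓ _ => extendZero fun i => (ℓ i : ℕ))
    (fun ℓ hℓ i => ⟨ℓ i, Nat.lt_succ_of_le (le_of_mem_partitionMultiplicities hℓ i)⟩)
    ?_ ?_ ?_ ?_ ?_
  · intro ℓ hℓ
    obtain ⟨hsum, hweight⟩ := (mem_filter.1 hℓ).2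
    refine mem_partitionMultiplicities.2 ⟨⟨?_, fun j hj => ?_⟩, ?_⟩
    · rw [sum_range_extendZero hN _ (fun _ v => v) fun _ => rfl, hsum]
    · rw [extendZero] at hj
      split_ifs at hj with h
      · omega
      · exact absurd rfl hj
    · rw [sum_range_extendZero hN _ (fun j v => (j + 1) * v) fun _ => mul_zero _, hweight]
  · intro ℓ hℓ
    have hext := extendZero_eq_of_mem_partitionMultiplicities hℓ
    obtain ⟨⟨hsum, -⟩, hweight⟩ := mem_partitionMultiplicities.1 hℓ
    refine mem_filter.2 ⟨mem_univ _, ?_, ?_⟩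
    · rw [← sum_range_extendZero hN _ (fun _ v => v) fun _ => rfl, hext, hsum]
    · rw [← sum_range_extendZero hN _ (fun j v => (j + 1) * v) fun _ => mul_zero _, hext, hweight]
  · intro ℓ _
    funext i
    ext
    simp [extendZero, i.isLt]
  · intro ℓ hℓ
    exact extendZero_eq_of_mem_partitionMultiplicities hℓ
  · intro ℓ _
    rw [prod_range_extendZero hN _ (fun _ v => ((v.factorial : ℕ) : ℂ)) fun _ => by simp,
      prod_range_extendZero hN _ (fun j v => (x (j + 1) / (j + 1).factorial) ^ v)
        fun _ => pow_zero _]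

theorem bell_eq_factorial_div_mul_coeff_egf_pow {n k N : ℕ} (hN : n - k + 1 ≤ N) (x : ℕ → ℂ) :
    bell n k x = n.factorial / k.factorial * (egf N x ^ k).coeff n := by
  rw [bell_eq_sum_partitionMultiplicities hN, coeff_egf_pow, mul_sum]
  refine sum_congr rfl fun ℓ hℓ => ?_
  obtain ⟨⟨hsum, -⟩, -⟩ := mem_partitionMultiplicities.1 hℓ
  have hk : (k.factorial : ℂ) ≠ 0 := Nat.cast_ne_zero.2 k.factorial_ne_zero
  rw [Nat.cast_multinomial, hsum]
  field_simp

theorem factorial_div_factorial_mul_choose {K : Type*} [Field K] [CharZero K] (l m r s : ℕ) :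
    ((l + m).factorial / (r + s).factorial * (r + s).choose r : K) =
      (l + m).choose l * (l.factorial / r.factorial) * (m.factorial / s.factorial) := by
  have hfact : ∀ j : ℕ, (j.factorial : K) ≠ 0 := fun j => Nat.cast_ne_zero.2 j.factorial_ne_zero
  rw [Nat.cast_add_choose, Nat.cast_add_choose]
  field_simp [hfact]

theorem bell_add_general (n k : ℕ) (x y : ℕ → ℂ) :
    bell n k (fun i => x i + y i) =
      ∑ rs ∈ Finset.HasAntidiagonal.antidiagonal k, ∑ lm ∈ Finset.HasAntidiagonal.antidiagonal n,
        (n.choose lm.1 : ℂ) * bell lm.1 rs.1 x * bell lm.2 rs.2 y := by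
  have hN : ∀ {l r : ℕ}, l ≤ n → l - r + 1 ≤ n + 1 := by omega
  rw [bell_eq_factorial_div_mul_coeff_egf_pow (hN le_rfl), egf_add,
    (Commute.all _ _).add_pow', finsetSum_coeff, mul_sum]
  refine sum_congr rfl fun ⟨r, s⟩ hrs => ?_
  rw [coeff_smul, coeff_mul, nsmul_eq_mul, mul_sum, mul_sum]
  refine sum_congr rfl fun ⟨l, m⟩ hlm => ?_
  rw [HasAntidiagonal.mem_antidiagonal] at hrs hlm
  rw [bell_eq_factorial_div_mul_coeff_egf_pow (hN (by omega)),
    bell_eq_factorial_div_mul_coeff_egf_pow (hN (by omega))]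
  subst hrs hlm
  linear_combination ((egf (l + m + 1) x ^ r).coeff l * (egf (l + m + 1) y ^ s).coeff m) *
    factorial_div_factorial_mul_choose (K := ℂ) l m r s

theorem bell_add (n k : ℕ) (hkn : k ≤ n) (x y : ℕ → ℂ) :
    bell n k (fun i => x i + y i) =
      ∑ rs ∈ Finset.HasAntidiagonal.antidiagonal k, ∑ lm ∈ Finset.HasAntidiagonal.antidiagonal n,
        (n.choose lm.1 : ℂ) * bell lm.1 rs.1 x * bell lm.2 rs.2 y :=
  bell_add_general n k x y
end
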